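/- arXiv:1703.06562 — 4 statements merged into one kernel-verified Lean document; each statement's English description precedes it below -/
import Mathlib

section
/- Let G and H be groups, σ ∈ G and τ ∈ H elements of finite order. Then C_{G×H}((σ, τ)) = C_G(σ) × C_H(τ), and the map Λ_{G×H}((σ, τ)) → Λ_G(σ) ×_{ℝ/ℤ} Λ_H(τ) sending [(a, b), t] to ([a, t], [b, t]) is a well-defined group isomorphism, where Λ_G(σ) ×_{ℝ/ℤ} Λ_H(τ) denotes the fiber product {(x, y) ∈ Λ_G(σ) × Λ_H(τ) : π(x) = π(y)} over the homomorphisms π : Λ_G(σ) → ℝ/ℤ and π : Λ_H(τ) → ℝ/ℤ given by [a, t] ↦ t + ℤ. -/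
/-!
An element of the centralizer of `(σ, τ)` is a pair of elements of the two centralizers, so
`[(a, b), t] ↦ ([a, t], [b, t])` is a homomorphism into the fiber product. It is injective because
`[a, t] = 1` forces `t = -k ∈ ℤ` and `a = σ ^ k` with the *same* integer `k` read off from `t`,
and surjective because the `ℝ`-coordinates of a point of the fiber product differ by an integer
`n`, which can be moved into the centralizer coordinate via `[b, t + n] = [b τ ^ n, t]`.
-/

namespace QEC

variable {G : Type*} [Group G]

/-- The centralizer of `g` in `G`. -/
abbrev Centz (g : G) : Subgroup G := Subgroup.centralizer {g}

/-- `g` as an element of its own centralizer. -/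
def gC (g : G) : Centz g :=
  ⟨g, by
    rw [Subgroup.mem_centralizer_iff]
    intro h hh
    rw [Set.mem_singleton_iff] at hh
    subst hh; rfl⟩

/-- The generator `(g, -1)` of `N_g` inside `C_G(g) × ℝ`. -/
def genN (g : G) : Centz g × Multiplicative ℝ := (gC g, Multiplicative.ofAdd (-1 : ℝ))

/-- The subgroup `N_g` of `C_G(g) × ℝ` generated by `(g, -1)`. -/
def Ng (g : G) : Subgroup (Centz g × Multiplicative ℝ) := Subgroup.zpowers (genN g)

lemma genN_mem_center (g : G) :
    genN g ∈ Subgroup.center (Centz g × Multiplicative ℝ) := by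
  rw [Subgroup.mem_center_iff]
  intro p
  have h1 : g * (p.1 : G) = (p.1 : G) * g :=
    Subgroup.mem_centralizer_iff.mp p.1.2 g (Set.mem_singleton g)
  exact Prod.ext (Subtype.ext h1.symm) (mul_comm _ _)

instance Ng_normal (g : G) : (Ng g).Normal := by
  constructor
  intro n hn x
  obtain ⟨k, rfl⟩ := Subgroup.mem_zpowers_iff.mp hn
  have hcmt : Commute x (genN g) := Subgroup.mem_center_iff.mp (genN_mem_center g) x
  have h2 : x * genN g ^ k * x⁻¹ = genN g ^ k := by
    rw [(hcmt.zpow_right k).eq, mul_inv_cancel_right]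
  rw [h2]
  exact Subgroup.zpow_mem _ (Subgroup.mem_zpowers _) k

/-- The group `Λ_G(g) = (C_G(g) × ℝ)/N_g`. -/
abbrev Lam (g : G) : Type _ := (Centz g × Multiplicative ℝ) ⧸ Ng g

/-- The class `[a, t]` in `Λ_G(g)`. -/
def lmk (g : G) (a : Centz g) (t : ℝ) : Lam g :=
  QuotientGroup.mk (a, Multiplicative.ofAdd t)

/-- The canonical map `C_G(g) → Λ_G(g)`, `a ↦ [a, 0]`. -/
def inclC (g : G) : Centz g →* Lam g :=
  (QuotientGroup.mk' (Ng g)).comp (MonoidHom.inl (Centz g) (Multiplicative ℝ))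

/-- The projection `Λ_G(g) → ℝ/ℤ`, `[a, t] ↦ t + ℤ`. -/
noncomputable def piHom (g : G) : Lam g →* Multiplicative (AddCircle (1 : ℝ)) :=
  QuotientGroup.lift (Ng g)
    ((AddMonoidHom.toMultiplicative
        (QuotientAddGroup.mk' (AddSubgroup.zmultiples (1 : ℝ)))).comp
      (MonoidHom.snd (Centz g) (Multiplicative ℝ)))
    (by
      intro x hx
      obtain ⟨k, rfl⟩ := Subgroup.mem_zpowers_iff.mp hx
      rw [MonoidHom.mem_ker, map_zpow]
      have h1 : (AddMonoidHom.toMultiplicative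
          (QuotientAddGroup.mk' (AddSubgroup.zmultiples (1 : ℝ)))).comp
          (MonoidHom.snd (Centz g) (Multiplicative ℝ)) (genN g) = 1 := by
        show Multiplicative.ofAdd
            ((QuotientAddGroup.mk' (AddSubgroup.zmultiples (1 : ℝ))) (-1 : ℝ)) = 1
        have : ((QuotientAddGroup.mk' (AddSubgroup.zmultiples (1 : ℝ))) (-1 : ℝ)) = 0 := by
          rw [QuotientAddGroup.mk'_apply, QuotientAddGroup.eq_zero_iff]
          exact AddSubgroup.neg_mem _ (AddSubgroup.mem_zmultiples (1 : ℝ))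
        rw [this]; rfl
      rw [h1, one_zpow])

/-- First projection `C_{G×H}((σ,τ)) → C_G(σ)`. -/
def centzFst {G H : Type*} [Group G] [Group H] (σ : G) (τ : H) :
    Centz (G := G × H) (σ, τ) →* Centz σ :=
  ((MonoidHom.fst G H).comp (Centz (G := G × H) (σ, τ)).subtype).codRestrict _ (fun a => by
    rw [Subgroup.mem_centralizer_iff]
    intro y hy
    rw [Set.mem_singleton_iff] at hy
    rw [hy]
    have h := Subgroup.mem_centralizer_iff.mp a.2 (σ, τ) (Set.mem_singleton _)
    exact congrArg Prod.fst h)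

/-- Second projection `C_{G×H}((σ,τ)) → C_H(τ)`. -/
def centzSnd {G H : Type*} [Group G] [Group H] (σ : G) (τ : H) :
    Centz (G := G × H) (σ, τ) →* Centz τ :=
  ((MonoidHom.snd G H).comp (Centz (G := G × H) (σ, τ)).subtype).codRestrict _ (fun a => by
    rw [Subgroup.mem_centralizer_iff]
    intro y hy
    rw [Set.mem_singleton_iff] at hy
    rw [hy]
    have h := Subgroup.mem_centralizer_iff.mp a.2 (σ, τ) (Set.mem_singleton _)
    exact congrArg Prod.snd h)

/-- The fiber product `Λ_G(σ) ×_{ℝ/ℤ} Λ_H(τ)` over the two projections to `ℝ/ℤ`. -/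
noncomputable def fiberProd {G H : Type*} [Group G] [Group H] (σ : G) (τ : H) :
    Subgroup (Lam σ × Lam τ) where
  carrier := {p | piHom σ p.1 = piHom τ p.2}
  one_mem' := by simp
  mul_mem' := by
    intro a b ha hb
    simp only [Set.mem_setOf_eq, Prod.fst_mul, Prod.snd_mul, map_mul] at *
    rw [ha, hb]
  inv_mem' := by
    intro a ha
    simp only [Set.mem_setOf_eq, Prod.fst_inv, Prod.snd_inv, map_inv] at *
    rw [ha]

lemma genN_zpow (g : G) (k : ℤ) :
    genN g ^ k = (gC g ^ k, Multiplicative.ofAdd (-(k : ℝ))) := by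
  refine Prod.ext (by simp [genN]) ?_
  apply Multiplicative.toAdd.injective
  simp [genN]

lemma exists_lmk_eq (g : G) (x : Lam g) : ∃ a t, lmk g a t = x :=
  QuotientGroup.induction_on x fun ⟨a, t⟩ => ⟨a, t.toAdd, rfl⟩

lemma lmk_eq_one_iff (g : G) (a : Centz g) (t : ℝ) :
    lmk g a t = 1 ↔ ∃ k : ℤ, (a : G) = g ^ k ∧ t = -k := by
  rw [lmk, QuotientGroup.eq_one_iff, Ng, Subgroup.mem_zpowers_iff]
  refine exists_congr fun k => ?_
  simp only [genN_zpow, Prod.ext_iff, Subtype.ext_iff, gC, Subgroup.coe_zpow]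
  exact ⟨fun ⟨h₁, h₂⟩ => ⟨h₁.symm, (congrArg Multiplicative.toAdd h₂).symm⟩,
    fun ⟨h₁, h₂⟩ => ⟨h₁.symm, congrArg Multiplicative.ofAdd h₂.symm⟩⟩

lemma lmk_mul_gC_zpow (g : G) (a : Centz g) (t : ℝ) (n : ℤ) :
    lmk g (a * gC g ^ n) t = lmk g a (t + n) := by
  rw [lmk, lmk, QuotientGroup.eq, Ng, Subgroup.mem_zpowers_iff]
  refine ⟨-n, ?_⟩
  rw [genN_zpow, Prod.ext_iff]
  constructor
  · simp
  · apply Multiplicative.toAdd.injective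
    simp

lemma piHom_lmk (g : G) (a : Centz g) (t : ℝ) :
    piHom g (lmk g a t) = Multiplicative.ofAdd (t : AddCircle (1 : ℝ)) :=
  rfl

section Prod

variable {G H : Type*} [Group G] [Group H]

lemma mem_centz_prod_iff (σ : G) (τ : H) (x : G × H) :
    x ∈ Centz (G := G × H) (σ, τ) ↔ x.1 ∈ Centz σ ∧ x.2 ∈ Centz τ := by
  simp only [Subgroup.mem_centralizer_singleton_iff, Prod.ext_iff, Prod.fst_mul, Prod.snd_mul]

noncomputable def lamProdHom (σ : G) (τ : H) : Lam (G := G × H) (σ, τ) →* Lam σ × Lam τ :=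
  QuotientGroup.lift _
    (((QuotientGroup.mk' (Ng σ)).comp ((centzFst σ τ).prodMap (MonoidHom.id _))).prod
      ((QuotientGroup.mk' (Ng τ)).comp ((centzSnd σ τ).prodMap (MonoidHom.id _))))
    (by
      rw [Ng, Subgroup.zpowers_le, MonoidHom.mem_ker]
      exact Prod.ext ((QuotientGroup.eq_one_iff _).mpr (Subgroup.mem_zpowers _))
        ((QuotientGroup.eq_one_iff _).mpr (Subgroup.mem_zpowers _)))

lemma lamProdHom_lmk (σ : G) (τ : H) (c : Centz (G := G × H) (σ, τ)) (t : ℝ) :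
    lamProdHom σ τ (lmk (σ, τ) c t) = (lmk σ (centzFst σ τ c) t, lmk τ (centzSnd σ τ c) t) :=
  rfl

lemma lamProdHom_mem_fiberProd (σ : G) (τ : H) (q : Lam (G := G × H) (σ, τ)) :
    lamProdHom σ τ q ∈ fiberProd σ τ := by
  obtain ⟨c, t, rfl⟩ := exists_lmk_eq _ q
  rfl

lemma lamProdHom_injective (σ : G) (τ : H) : Function.Injective (lamProdHom σ τ) := by
  rw [injective_iff_map_eq_one]
  intro q hq
  obtain ⟨c, t, rfl⟩ := exists_lmk_eq _ q
  rw [lamProdHom_lmk, Prod.mk_eq_one, lmk_eq_one_iff, lmk_eq_one_iff] at hq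
  obtain ⟨⟨k, hc₁, hk⟩, ⟨m, hc₂, hm⟩⟩ := hq
  obtain rfl : k = m := by exact_mod_cast neg_injective (hk.symm.trans hm)
  exact (lmk_eq_one_iff _ c t).mpr ⟨k, Prod.ext hc₁ hc₂, hk⟩

lemma exists_lamProdHom_eq (σ : G) (τ : H) (y : Lam σ × Lam τ) (hy : y ∈ fiberProd σ τ) :
    ∃ q, lamProdHom σ τ q = y := by
  obtain ⟨a, s, ha⟩ := exists_lmk_eq σ y.1
  obtain ⟨b, t, hb⟩ := exists_lmk_eq τ y.2
  have hst : (s : AddCircle (1 : ℝ)) = t := by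
    simpa [fiberProd, ← ha, ← hb, piHom_lmk] using hy
  obtain ⟨n, hn⟩ := AddSubgroup.mem_zmultiples_iff.mp (QuotientAddGroup.eq.mp hst)
  have ht : t = s + n := by simp only [zsmul_eq_mul, mul_one] at hn; linarith
  let b' : Centz τ := b * gC τ ^ n
  refine ⟨lmk (σ, τ) ⟨((a : G), (b' : H)), (mem_centz_prod_iff σ τ _).mpr ⟨a.2, b'.2⟩⟩ s, ?_⟩
  rw [lamProdHom_lmk]
  refine Prod.ext ha ?_
  rw [← hb, ht, ← lmk_mul_gC_zpow]
  rfl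

end Prod

theorem statement7_general {G H : Type*} [Group G] [Group H] (σ : G) (τ : H) :
    (∀ x : G × H, x ∈ Centz (G := G × H) (σ, τ) ↔ x.1 ∈ Centz σ ∧ x.2 ∈ Centz τ)
    ∧ ∃ e : Lam (G := G × H) (σ, τ) ≃* fiberProd σ τ,
        ∀ (c : Centz (G := G × H) (σ, τ)) (t : ℝ),
          ((e (lmk (σ, τ) c t) : Lam σ × Lam τ))
            = (lmk σ (centzFst σ τ c) t, lmk τ (centzSnd σ τ c) t) := by
  refine ⟨mem_centz_prod_iff σ τ, ?_⟩
  let e := (lamProdHom σ τ).codRestrict (fiberProd σ τ) (lamProdHom_mem_fiberProd σ τ)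
  have he : Function.Bijective e := by
    refine ⟨fun q r hqr => lamProdHom_injective σ τ (congrArg Subtype.val hqr), ?_⟩
    rintro ⟨y, hy⟩
    obtain ⟨q, hq⟩ := exists_lamProdHom_eq σ τ y hy
    exact ⟨q, Subtype.ext hq⟩
  exact ⟨MulEquiv.ofBijective e he, fun c t => lamProdHom_lmk σ τ c t⟩

/-- `C_{G×H}((σ,τ)) = C_G(σ) × C_H(τ)`, and
`Λ_{G×H}((σ,τ)) ≅ Λ_G(σ) ×_{ℝ/ℤ} Λ_H(τ)` via `[(a,b), t] ↦ ([a,t], [b,t])`. -/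
theorem statement7 {G H : Type*} [Group G] [Group H] (σ : G) (τ : H)
    (hσ : IsOfFinOrder σ) (hτ : IsOfFinOrder τ) :
    (∀ x : G × H, x ∈ Centz (G := G × H) (σ, τ) ↔ x.1 ∈ Centz σ ∧ x.2 ∈ Centz τ)
    ∧ ∃ e : Lam (G := G × H) (σ, τ) ≃* fiberProd σ τ,
        ∀ (c : Centz (G := G × H) (σ, τ)) (t : ℝ),
          ((e (lmk (σ, τ) c t) : Lam σ × Lam τ))
            = (lmk σ (centzFst σ τ c) t, lmk τ (centzSnd σ τ c) t) :=
  statement7_general σ τ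

end QEC
end

section
/- Let G be a group and σ ∈ G an element of order l. Let V be a finite-dimensional complex vector space and ρ : C_G(σ) → GL(V) an injective group homomorphism. Suppose V = ⨁_{j∈J} V_j is a direct sum decomposition into ρ-invariant subspaces (J a finite index set) such that for each j there is an integer m_j ∈ {1, …, l} with ρ(σ)v = e^{2πi m_j/l}·v for all v ∈ V_j, and suppose there is j₀ ∈ J with V_{j₀} ≠ 0 and ρ(a)v = v for all a ∈ C_G(σ) and v ∈ V_{j₀}. Then the map C_G(σ) × ℝ → GL(V) sending (a, t) to the operator that acts on each V_j by v ↦ e^{2πi m_j t/l}·ρ(a)v is a group homomorphism trivial on N_σ, and the induced representation of Λ_G(σ) on V is faithful (injective). -/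
/-!
The twist by `t ↦ e^{2πi m_j t/l}` is the block-scalar operator `D t` of the decomposition
`V = ⨁ V_j`; it commutes with `ρ` because the `V_j` are `ρ`-invariant, and `D 1 = ρ(σ)`, so
`(a, t) ↦ ρ(a) D(t)` kills `(σ, -1)`. Conversely, if `ρ(a) D(t) = 1`, evaluating on a nonzero
vector of the trivial summand `V_{j₀}` (where necessarily `m_{j₀} = l`) gives `e^{2πi t} = 1`,
so `t = n ∈ ℤ`, hence `ρ(a σⁿ) = 1` and `(a, t) = (σ, -1)^{-n}` by faithfulness of `ρ`.
-/

namespace QEC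

variable {G : Type*} [Group G]

section BlockScalar

open DirectSum

variable {R V ι : Type*} [CommSemiring R] [AddCommMonoid V] [Module R V] [DecidableEq ι]
  {A : ι → Submodule R V}

theorem _root_.DirectSum.IsInternal.linearMap_ext {M : Type*} [AddCommMonoid M] [Module R M]
    (h : IsInternal A) {f g : V →ₗ[R] M} (hfg : ∀ i, ∀ v ∈ A i, f v = g v) : f = g :=
  LinearMap.eqLocus_eq_top.mp <| eq_top_iff.mpr <|
    h.submodule_iSup_eq_top ▸ iSup_le fun i v hv => hfg i v hv

theorem _root_.DirectSum.IsInternal.ofBijective_coeLinearMap_symm_apply_of_mem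
    (h : IsInternal A) {i : ι} {v : V} (hv : v ∈ A i) :
    (LinearEquiv.ofBijective (coeLinearMap A) h).symm v = lof R ι (fun i => A i) i ⟨v, hv⟩ :=
  (LinearEquiv.symm_apply_eq _).mpr (coeLinearMap_lof A i ⟨v, hv⟩).symm

noncomputable def _root_.DirectSum.IsInternal.blockScalar (h : IsInternal A) :
    (ι → R) →* Module.End R V where
  toFun c := coeLinearMap A ∘ₗ lmap (fun i => c i • LinearMap.id) ∘ₗ
    (LinearEquiv.ofBijective (coeLinearMap A) h).symm.toLinearMap
  map_one' := h.linearMap_ext fun i v hv => by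
    simp [h.ofBijective_coeLinearMap_symm_apply_of_mem hv]
  map_mul' c d := h.linearMap_ext fun i v hv => by
    simp [h.ofBijective_coeLinearMap_symm_apply_of_mem hv, smul_smul, mul_comm]

theorem _root_.DirectSum.IsInternal.blockScalar_apply_of_mem (h : IsInternal A) (c : ι → R)
    {i : ι} {v : V} (hv : v ∈ A i) : h.blockScalar c v = c i • v := by
  simp [IsInternal.blockScalar, h.ofBijective_coeLinearMap_symm_apply_of_mem hv]

theorem _root_.DirectSum.IsInternal.commute_blockScalar (h : IsInternal A) (c : ι → R)
    {f : Module.End R V} (hf : ∀ i, ∀ v ∈ A i, f v ∈ A i) : Commute f (h.blockScalar c) :=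
  h.linearMap_ext fun i v hv => by
    simp only [Module.End.mul_apply, h.blockScalar_apply_of_mem c hv,
      h.blockScalar_apply_of_mem c (hf i v hv), map_smul]

end BlockScalar

section RootsOfUnity

open Complex
open scoped Real

theorem _root_.Complex.exp_two_pi_I_mul_eq_one_iff {t : ℝ} :
    exp (2 * π * I * t) = 1 ↔ ∃ n : ℤ, t = n := by
  refine exp_eq_one_iff.trans (exists_congr fun n => ?_)
  rw [mul_comm, mul_left_inj' two_pi_I_ne_zero, ← ofReal_intCast, ofReal_inj]

theorem _root_.Complex.eq_of_exp_two_pi_I_mul_div_eq_one {k l : ℕ} (hk : 0 < k) (hkl : k ≤ l)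
    (h : exp (2 * π * I * k / l) = 1) : k = l := by
  have hζ := isPrimitiveRoot_exp l (by omega)
  rw [show 2 * π * I * k / l = k * (2 * π * I / l) by ring, exp_nat_mul,
    hζ.pow_eq_one_iff_dvd] at h
  exact le_antisymm hkl (Nat.le_of_dvd hk h)

end RootsOfUnity

section Twist

open Complex Multiplicative
open scoped Real

noncomputable def twistChar (k l : ℂ) : Multiplicative ℝ →* ℂ where
  toFun t := exp (2 * π * I * k * ((toAdd t : ℝ) : ℂ) / l)
  map_one' := by simp
  map_mul' s t := by
    rw [← exp_add]
    congr 1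
    rw [toAdd_mul, ofReal_add]
    ring

theorem twistChar_self {l : ℂ} (hl : l ≠ 0) (t : ℝ) :
    twistChar l l (ofAdd t) = exp (2 * π * I * t) := by
  simp only [twistChar, MonoidHom.coe_mk, OneHom.coe_mk, toAdd_ofAdd]
  congr 1
  field_simp

theorem twistChar_ofAdd_one (k l : ℂ) : twistChar k l (ofAdd 1) = exp (2 * π * I * k / l) := by
  simp [twistChar]

end Twist

section TwistedCoprod

open Multiplicative

variable {C P : Type*} [Group C] [Group P] {ρ : C →* P} {D : Multiplicative ℝ →* P}

theorem ker_noncommCoprod_eq_zpowers (comm : ∀ a t, Commute (ρ a) (D t))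
    (hρ : Function.Injective ρ) {g : C} (hg : D (ofAdd 1) = ρ g)
    (hker_int : ∀ a t, ρ a * D (ofAdd t) = 1 → ∃ n : ℤ, t = n) :
    (ρ.noncommCoprod D comm).ker = Subgroup.zpowers (g, ofAdd (-1 : ℝ)) := by
  have hDint (n : ℤ) : D (ofAdd (n : ℝ)) = ρ (g ^ n) := by
    rw [← zsmul_one, ofAdd_zsmul, map_zpow, map_zpow, hg]
  refine le_antisymm ?_ (Subgroup.zpowers_le.mpr ?_)
  · rintro ⟨a, t⟩ hat
    obtain ⟨n, hn⟩ := hker_int a (toAdd t) hat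
    have hρa : ρ (a * g ^ n) = 1 := by
      rw [map_mul, ← hDint, ← hn]
      exact hat
    refine ⟨-n, Prod.ext ?_ ?_⟩
    · simp [eq_inv_of_mul_eq_one_left (hρ (hρa.trans (map_one ρ).symm))]
    · rw [Prod.pow_snd, ← ofAdd_zsmul, ← ofAdd_toAdd t, hn]
      simp
  · change ρ g * D (ofAdd (-1)) = 1
    rw [ofAdd_neg, map_inv, hg, mul_inv_cancel]

end TwistedCoprod

theorem statement10_general {G : Type*} [Group G] (σ : G) (l : ℕ)
    {V : Type*} [AddCommGroup V] [Module ℂ V]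
    {J : Type*} [DecidableEq J] (Vj : J → Submodule ℂ V)
    (hdec : DirectSum.IsInternal Vj)
    (ρ : Centz σ →* (Module.End ℂ V)ˣ) (hρ : Function.Injective ρ)
    (hinv : ∀ (j : J) (a : Centz σ), ∀ v ∈ Vj j, (ρ a : Module.End ℂ V) v ∈ Vj j)
    (m : J → ℕ) (hm : ∀ j, 1 ≤ m j ∧ m j ≤ l)
    (hσact : ∀ j, ∀ v ∈ Vj j, (ρ (gC σ) : Module.End ℂ V) v
        = Complex.exp (2 * (Real.pi : ℂ) * Complex.I * (m j : ℂ) / (l : ℂ)) • v)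
    (j₀ : J) (hj₀ : Vj j₀ ≠ ⊥)
    (htriv : ∀ a : Centz σ, ∀ v ∈ Vj j₀, (ρ a : Module.End ℂ V) v = v) :
    ∃ F : Centz σ × Multiplicative ℝ →* (Module.End ℂ V)ˣ,
      (∀ (a : Centz σ) (t : ℝ) (j : J), ∀ v ∈ Vj j,
        (F (a, Multiplicative.ofAdd t) : Module.End ℂ V) v
          = Complex.exp (2 * (Real.pi : ℂ) * Complex.I * (m j : ℂ) * (t : ℂ) / (l : ℂ))
              • ((ρ a : Module.End ℂ V) v))
      ∧ (∀ n ∈ Ng σ, F n = 1)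
      ∧ ∃ ψ : Lam σ →* (Module.End ℂ V)ˣ,
          (∀ (a : Centz σ) (t : ℝ) (j : J), ∀ v ∈ Vj j,
            (ψ (lmk σ a t) : Module.End ℂ V) v
              = Complex.exp (2 * (Real.pi : ℂ) * Complex.I * (m j : ℂ) * (t : ℂ) / (l : ℂ))
                  • ((ρ a : Module.End ℂ V) v))
          ∧ Function.Injective ψ := by
  have hl : l ≠ 0 := by have := hm j₀; omega
  obtain ⟨v₀, hv₀, hv₀_ne⟩ := Submodule.exists_mem_ne_zero_of_ne_bot hj₀
  have hm₀ : m j₀ = l := Complex.eq_of_exp_two_pi_I_mul_div_eq_one (hm j₀).1 (hm j₀).2 <|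
    smul_left_injective ℂ hv₀_ne <| by
      simp only [← hσact j₀ v₀ hv₀, htriv _ _ hv₀, one_smul]
  let D : Multiplicative ℝ →* (Module.End ℂ V)ˣ :=
    (hdec.blockScalar.comp (MonoidHom.pi fun j => twistChar (m j) l)).toHomUnits
  have hD (t : Multiplicative ℝ) (j : J) {v : V} (hv : v ∈ Vj j) :
      (D t : Module.End ℂ V) v = twistChar (m j) l t • v :=
    hdec.blockScalar_apply_of_mem _ hv
  have comm (a : Centz σ) (t : Multiplicative ℝ) : Commute (ρ a) (D t) :=
    Units.ext (hdec.commute_blockScalar _ (hinv · a))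
  let F := ρ.noncommCoprod D comm
  have hF (a : Centz σ) (t : ℝ) (j : J) (v : V) (hv : v ∈ Vj j) :
      (F (a, Multiplicative.ofAdd t) : Module.End ℂ V) v
        = Complex.exp (2 * Real.pi * Complex.I * m j * t / l) • (ρ a : Module.End ℂ V) v := by
    simp [F, hD _ j hv, twistChar]
  have hD_one : D (Multiplicative.ofAdd 1) = ρ (gC σ) :=
    Units.ext <| hdec.linearMap_ext fun j v hv => by
      rw [hD _ j hv, hσact j v hv, twistChar_ofAdd_one]
  have hker : F.ker = Ng σ := ker_noncommCoprod_eq_zpowers comm hρ hD_one fun a t hat => by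
    have h := congr_arg (fun u : (Module.End ℂ V)ˣ => (u : Module.End ℂ V) v₀) hat
    simp only [Units.val_mul, Module.End.mul_apply, hD _ j₀ hv₀, map_smul, htriv _ _ hv₀,
      Units.val_one, Module.End.one_apply, hm₀, twistChar_self (Nat.cast_ne_zero.mpr hl)] at h
    exact Complex.exp_two_pi_I_mul_eq_one_iff.mp <|
      smul_left_injective ℂ hv₀_ne (h.trans (one_smul ℂ v₀).symm)
  exact ⟨F, hF, fun n hn => hker.ge hn, QuotientGroup.lift _ F hker.ge, hF,
    (QuotientGroup.injective_lift_iff _ _ _).mpr hker.symm⟩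

/-- Let `σ ∈ G` have order `l`, let `ρ : C_G(σ) → GL(V)` be faithful,
with `V = ⨁_j V_j` a decomposition into `ρ`-invariant subspaces on which `ρ(σ)` acts by
`e^{2πi m_j/l}`, and suppose some nonzero `V_{j₀}` carries the trivial `C_G(σ)`-action.
Then `(a, t) ↦ (v ↦ e^{2πi m_j t/l}·ρ(a)v on V_j)` is a homomorphism
`C_G(σ) × ℝ → GL(V)` trivial on `N_σ`, and the induced representation of `Λ_G(σ)`
on `V` is faithful. -/
theorem statement10 {G : Type*} [Group G] (σ : G) (l : ℕ)
    (hl : orderOf σ = l) (hl0 : 0 < l)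
    {V : Type*} [AddCommGroup V] [Module ℂ V] [FiniteDimensional ℂ V]
    {J : Type*} [Fintype J] [DecidableEq J] (Vj : J → Submodule ℂ V)
    (hdec : DirectSum.IsInternal Vj)
    (ρ : Centz σ →* (Module.End ℂ V)ˣ) (hρ : Function.Injective ρ)
    (hinv : ∀ (j : J) (a : Centz σ), ∀ v ∈ Vj j, (ρ a : Module.End ℂ V) v ∈ Vj j)
    (m : J → ℕ) (hm : ∀ j, 1 ≤ m j ∧ m j ≤ l)
    (hσact : ∀ j, ∀ v ∈ Vj j, (ρ (gC σ) : Module.End ℂ V) v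
        = Complex.exp (2 * (Real.pi : ℂ) * Complex.I * (m j : ℂ) / (l : ℂ)) • v)
    (j₀ : J) (hj₀ : Vj j₀ ≠ ⊥)
    (htriv : ∀ a : Centz σ, ∀ v ∈ Vj j₀, (ρ a : Module.End ℂ V) v = v) :
    ∃ F : Centz σ × Multiplicative ℝ →* (Module.End ℂ V)ˣ,
      (∀ (a : Centz σ) (t : ℝ) (j : J), ∀ v ∈ Vj j,
        (F (a, Multiplicative.ofAdd t) : Module.End ℂ V) v
          = Complex.exp (2 * (Real.pi : ℂ) * Complex.I * (m j : ℂ) * (t : ℂ) / (l : ℂ))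
              • ((ρ a : Module.End ℂ V) v))
      ∧ (∀ n ∈ Ng σ, F n = 1)
      ∧ ∃ ψ : Lam σ →* (Module.End ℂ V)ˣ,
          (∀ (a : Centz σ) (t : ℝ) (j : J), ∀ v ∈ Vj j,
            (ψ (lmk σ a t) : Module.End ℂ V) v
              = Complex.exp (2 * (Real.pi : ℂ) * Complex.I * (m j : ℂ) * (t : ℂ) / (l : ℂ))
                  • ((ρ a : Module.End ℂ V) v))
          ∧ Function.Injective ψ :=
  statement10_general σ l Vj hdec ρ hρ hinv m hm hσact j₀ hj₀ htriv

end QEC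
end

section
/- Let G be a group and σ ∈ G an element of order l. Let V be a nonzero finite-dimensional complex vector space and ρ : C_G(σ) → GL(V) an injective group homomorphism. Suppose V = ⨁_{j∈J} V_j is a direct sum decomposition into ρ-invariant subspaces (J a finite index set) such that for each j there is an integer m_j ∈ {1, …, l} with ρ(σ)v = e^{2πi m_j/l}·v for all v ∈ V_j. Then the map C_G(σ) × ℝ → GL(V ⊕ V) sending (a, t) to the operator acting on the first-summand copy of each V_j by v ↦ e^{2πi m_j t/l}·ρ(a)v and on the second-summand copy of each V_j by v ↦ e^{2πi (m_j/l − 1)t}·ρ(a)v is a group homomorphism trivial on N_σ, and the induced representation of Λ_G(σ) on V ⊕ V is faithful (injective). -/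
/-!
On the first copy of `V`, `(a, t)` acts by `ρ(a) D(t)`, where `D(t)` is the scalar
`e^{2πi m_j t/l}` on `V_j`; since `D(1) = ρ(σ)`, the element `(σ, -1)` acts trivially. On the
second copy the action is the same operator times the scalar `e^{-2πit}`. If `(a, t)` acts
trivially on `V ⊕ V`, this scalar is `1` on the nonzero space `V`, so `t = n` is an integer; then
`ρ(a σⁿ) = ρ(a) D(n) = 1`, and faithfulness of `ρ` gives `(a, t) = (σ, -1)⁻ⁿ ∈ N_σ`.
-/

open Complex
open scoped Real

noncomputable def Complex.expCharacter (θ : ℂ) : Multiplicative ℝ →* ℂ where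
  toFun t := exp (2 * π * I * θ * t.toAdd)
  map_one' := by simp
  map_mul' s t := by
    rw [← exp_add]
    push_cast [toAdd_mul]
    ring_nf

namespace Module.End

variable {R M N : Type*} [CommSemiring R] [AddCommMonoid M] [Module R M] [AddCommMonoid N]
  [Module R N]

def prodMapUnits : (Module.End R M)ˣ × (Module.End R N)ˣ →* (Module.End R (M × N))ˣ :=
  (Units.map (LinearMap.prodMapRingHom R M N).toMonoidHom).comp MulEquiv.prodUnits.symm.toMonoidHom

theorem prodMapUnits_val (f : (Module.End R M)ˣ) (g : (Module.End R N)ˣ) :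
    (prodMapUnits (f, g) : Module.End R (M × N)) =
      (f : Module.End R M).prodMap (g : Module.End R N) :=
  rfl

theorem prodMapUnits_eq_one_iff {f : (Module.End R M)ˣ} {g : (Module.End R N)ˣ} :
    prodMapUnits (f, g) = 1 ↔ f = 1 ∧ g = 1 := by
  refine ⟨fun h => ?_, fun ⟨hf, hg⟩ => by rw [hf, hg, Prod.mk_one_one, map_one]⟩
  have h' : (f : Module.End R M).prodMap (g : Module.End R N) = 1 := congrArg Units.val h
  refine ⟨Units.ext (LinearMap.ext fun x => ?_), Units.ext (LinearMap.ext fun y => ?_)⟩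
  · simpa using congrArg Prod.fst (LinearMap.congr_fun h' (x, 0))
  · simpa using congrArg Prod.snd (LinearMap.congr_fun h' (0, y))

end Module.End

theorem MonoidHom.noncommCoprod_ofAdd_intCast {H K : Type*} [Group H] [Group K] (ρ : H →* K)
    (U : Multiplicative ℝ →* K) (comm : ∀ a t, Commute (ρ a) (U t)) {s : H}
    (hs : U (.ofAdd 1) = ρ s) (a : H) (n : ℤ) :
    ρ.noncommCoprod U comm (a, .ofAdd (n : ℝ)) = ρ (a * s ^ n) := by
  rw [noncommCoprod_apply, map_mul, map_zpow, ← hs, ← map_zpow, ← ofAdd_zsmul, zsmul_one]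

namespace DirectSum.IsInternal

section diagonal

variable {ι R M : Type*} [DecidableEq ι] [CommSemiring R] [AddCommMonoid M] [Module R M]
  {A : ι → Submodule R M}

theorem linearMap_ext_s11 {N : Type*} [AddCommMonoid N] [Module R N] (h : IsInternal A)
    {f g : M →ₗ[R] N} (hfg : ∀ i, ∀ x ∈ A i, f x = g x) : f = g := by
  have hle : ⨆ i, A i ≤ LinearMap.eqLocus f g := iSup_le fun i x hx => hfg i x hx
  exact LinearMap.ext fun x => hle (h.submodule_iSup_eq_top ▸ Submodule.mem_top)

noncomputable def diagonalFun (h : IsInternal A) (c : ι → R) : Module.End R M :=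
  toModule R ι M (fun i => c i • (A i).subtype) ∘ₗ
    (LinearEquiv.ofBijective (coeLinearMap A) h).symm.toLinearMap

theorem diagonalFun_apply_of_mem (h : IsInternal A) (c : ι → R) {i : ι} {x : M} (hx : x ∈ A i) :
    h.diagonalFun c x = c i • x := by
  have hsymm : (LinearEquiv.ofBijective (coeLinearMap A) h).symm x =
      lof R ι (fun i => A i) i ⟨x, hx⟩ :=
    (LinearEquiv.symm_apply_eq _).mpr (coeLinearMap_of A i ⟨x, hx⟩).symm
  simp [diagonalFun, hsymm]

noncomputable def diagonal (h : IsInternal A) : (ι → R) →* Module.End R M where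
  toFun := h.diagonalFun
  map_one' := h.linearMap_ext_s11 fun i x hx => by simp [h.diagonalFun_apply_of_mem _ hx]
  map_mul' c d := h.linearMap_ext_s11 fun i x hx => by
    simp only [Module.End.mul_apply, h.diagonalFun_apply_of_mem _ hx, map_smul, Pi.mul_apply,
      mul_smul]
    exact smul_comm _ _ _

theorem diagonal_apply_of_mem (h : IsInternal A) (c : ι → R) {i : ι} {x : M} (hx : x ∈ A i) :
    h.diagonal c x = c i • x :=
  h.diagonalFun_apply_of_mem c hx

theorem commute_diagonal (h : IsInternal A) {f : Module.End R M}
    (hf : ∀ i, ∀ x ∈ A i, f x ∈ A i) (c : ι → R) : Commute f (h.diagonal c) :=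
  h.linearMap_ext_s11 fun i x hx => by
    simp [Module.End.mul_apply, h.diagonal_apply_of_mem c hx,
      h.diagonal_apply_of_mem c (hf i x hx)]

end diagonal

variable {ι M : Type*} [DecidableEq ι] [AddCommGroup M] [Module ℂ M] {A : ι → Submodule ℂ M}

noncomputable def diagonalFlow (h : IsInternal A) (θ : ι → ℂ) :
    Multiplicative ℝ →* (Module.End ℂ M)ˣ :=
  (h.diagonal.comp (MonoidHom.pi fun i => expCharacter (θ i))).toHomUnits

theorem diagonalFlow_apply_of_mem (h : IsInternal A) (θ : ι → ℂ) (t : ℝ) {i : ι} {x : M}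
    (hx : x ∈ A i) :
    (h.diagonalFlow θ (.ofAdd t) : Module.End ℂ M) x = exp (2 * π * I * θ i * t) • x :=
  h.diagonal_apply_of_mem (fun i => expCharacter (θ i) (.ofAdd t)) hx

theorem diagonalFlow_ofAdd_one (h : IsInternal A) (θ : ι → ℂ) {u : (Module.End ℂ M)ˣ}
    (hu : ∀ i, ∀ x ∈ A i, (u : Module.End ℂ M) x = exp (2 * π * I * θ i) • x) :
    h.diagonalFlow θ (.ofAdd 1) = u :=
  Units.ext <| h.linearMap_ext_s11 fun i x hx => by
    rw [h.diagonalFlow_apply_of_mem θ 1 hx, hu i x hx, ofReal_one, mul_one]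

section twist

variable {H : Type*} [Monoid H] (h : IsInternal A) (ρ : H →* (Module.End ℂ M)ˣ)
  (hρ : ∀ i a, ∀ x ∈ A i, (ρ a : Module.End ℂ M) x ∈ A i) (θ : ι → ℂ)

noncomputable def twist : H × Multiplicative ℝ →* (Module.End ℂ M)ˣ :=
  ρ.noncommCoprod (h.diagonalFlow θ) fun a _ => Units.ext <| h.commute_diagonal (fun i => hρ i a) _

theorem twist_apply_of_mem (a : H) (t : ℝ) {i : ι} {x : M} (hx : x ∈ A i) :
    (h.twist ρ hρ θ (a, .ofAdd t) : Module.End ℂ M) x =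
      exp (2 * π * I * θ i * t) • (ρ a : Module.End ℂ M) x := by
  show (ρ a : Module.End ℂ M) ((h.diagonalFlow θ (.ofAdd t) : Module.End ℂ M) x) = _
  rw [h.diagonalFlow_apply_of_mem θ t hx, map_smul]

theorem twist_sub_one (a : H) (t : ℝ) :
    (h.twist ρ hρ (fun i => θ i - 1) (a, .ofAdd t) : Module.End ℂ M) =
      exp (-(2 * π * I * t)) • (h.twist ρ hρ θ (a, .ofAdd t) : Module.End ℂ M) :=
  h.linearMap_ext_s11 fun i x hx => by
    rw [LinearMap.smul_apply, h.twist_apply_of_mem ρ hρ _ a t hx,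
      h.twist_apply_of_mem ρ hρ θ a t hx, smul_smul, ← exp_add]
    ring_nf

theorem exists_intCast_of_twist_eq_one [Nontrivial M] {a : H} {t : ℝ}
    (h₁ : h.twist ρ hρ θ (a, .ofAdd t) = 1)
    (h₂ : h.twist ρ hρ (fun i => θ i - 1) (a, .ofAdd t) = 1) : ∃ n : ℤ, t = n := by
  have hsmul := h.twist_sub_one ρ hρ θ a t
  rw [h₁, h₂, Units.val_one] at hsmul
  have hexp : exp (-(2 * π * I * t)) = 1 :=
    (algebraMap ℂ (Module.End ℂ M)).injective
      (by simpa [Algebra.algebraMap_eq_smul_one] using hsmul.symm)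
  obtain ⟨n, hn⟩ := exp_eq_one_iff.mp hexp
  refine ⟨-n, ?_⟩
  have ht : (t : ℂ) = ((-n : ℤ) : ℂ) :=
    mul_left_cancel₀ two_pi_I_ne_zero (by push_cast; linear_combination -hn)
  exact_mod_cast ht

-- The paper's `(V)_σ ⊕ (V)_σ ⊗ q⁻¹`, for `θ j = m_j / l`.
noncomputable def twistPair : H × Multiplicative ℝ →* (Module.End ℂ (M × M))ˣ :=
  Module.End.prodMapUnits.comp ((h.twist ρ hρ θ).prod (h.twist ρ hρ fun i => θ i - 1))

theorem twistPair_apply_of_mem (a : H) (t : ℝ) {i : ι} {x : M} (hx : x ∈ A i) :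
    (h.twistPair ρ hρ θ (a, .ofAdd t) : Module.End ℂ (M × M)) (x, 0) =
        (exp (2 * π * I * θ i * t) • (ρ a : Module.End ℂ M) x, 0) ∧
      (h.twistPair ρ hρ θ (a, .ofAdd t) : Module.End ℂ (M × M)) (0, x) =
        (0, exp (2 * π * I * (θ i - 1) * t) • (ρ a : Module.End ℂ M) x) := by
  simp only [twistPair, MonoidHom.comp_apply, MonoidHom.prod_apply, Module.End.prodMapUnits_val,
    LinearMap.prodMap_apply, map_zero, h.twist_apply_of_mem ρ hρ _ a t hx]
  trivial

theorem twistPair_eq_one_iff (p : H × Multiplicative ℝ) :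
    h.twistPair ρ hρ θ p = 1 ↔
      h.twist ρ hρ θ p = 1 ∧ h.twist ρ hρ (fun i => θ i - 1) p = 1 :=
  Module.End.prodMapUnits_eq_one_iff

end twist

end DirectSum.IsInternal

namespace QEC

variable {G : Type*} [Group G]

theorem mem_Ng_of_noncommCoprod_eq_one {K : Type*} [Group K] {σ : G} {ρ : Centz σ →* K}
    (hρ : Function.Injective ρ) {U : Multiplicative ℝ →* K} (comm : ∀ a t, Commute (ρ a) (U t))
    (hσ : U (.ofAdd 1) = ρ (gC σ)) {a : Centz σ} {n : ℤ}
    (h : ρ.noncommCoprod U comm (a, .ofAdd (n : ℝ)) = 1) : (a, .ofAdd (n : ℝ)) ∈ Ng σ := by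
  rw [ρ.noncommCoprod_ofAdd_intCast U comm hσ, ← map_one ρ] at h
  refine ⟨-n, Prod.ext ?_ ?_⟩
  · simp [genN, eq_inv_of_mul_eq_one_left (hρ h)]
  · simp [genN, ← ofAdd_zsmul]

section

variable {V J : Type*} [AddCommGroup V] [Module ℂ V] [DecidableEq J] {Vj : J → Submodule ℂ V}
  (hdec : DirectSum.IsInternal Vj) {σ : G} (ρ : Centz σ →* (Module.End ℂ V)ˣ)
  (hinv : ∀ (j : J) (a : Centz σ), ∀ v ∈ Vj j, (ρ a : Module.End ℂ V) v ∈ Vj j) (θ : J → ℂ)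

theorem twist_genN
    (hσ : ∀ j, ∀ v ∈ Vj j, (ρ (gC σ) : Module.End ℂ V) v = exp (2 * π * I * θ j) • v) :
    hdec.twist ρ hinv θ (genN σ) = 1 := by
  have hgen : genN σ = (gC σ, .ofAdd ((-1 : ℤ) : ℝ)) := by simp [genN]
  rw [hgen]
  exact (MonoidHom.noncommCoprod_ofAdd_intCast ρ _ _ (hdec.diagonalFlow_ofAdd_one θ hσ) _ _).trans
    (by rw [zpow_neg_one, mul_inv_cancel, map_one])

theorem ker_twistPair [Nontrivial V] (hρ : Function.Injective ρ)
    (hσ : ∀ j, ∀ v ∈ Vj j, (ρ (gC σ) : Module.End ℂ V) v = exp (2 * π * I * θ j) • v) :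
    (hdec.twistPair ρ hinv θ).ker = Ng σ := by
  have hσ' : ∀ j, ∀ v ∈ Vj j,
      (ρ (gC σ) : Module.End ℂ V) v = exp (2 * π * I * (θ j - 1)) • v := by
    intro j v hv
    rw [hσ j v hv, mul_sub, mul_one, exp_sub, exp_two_pi_mul_I, div_one]
  refine le_antisymm (fun p hp => ?_) (Subgroup.zpowers_le.mpr ?_)
  · obtain ⟨a, t⟩ := p
    obtain ⟨h₁, h₂⟩ := (hdec.twistPair_eq_one_iff ρ hinv θ _).mp hp
    obtain ⟨n, rfl⟩ := hdec.exists_intCast_of_twist_eq_one ρ hinv θ h₁ h₂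
    exact mem_Ng_of_noncommCoprod_eq_one hρ _ (hdec.diagonalFlow_ofAdd_one θ hσ) h₁
  · exact (hdec.twistPair_eq_one_iff ρ hinv θ _).mpr
      ⟨twist_genN hdec ρ hinv θ hσ, twist_genN hdec ρ hinv _ hσ'⟩

end

theorem statement11_general {G : Type*} [Group G] (σ : G) (l : ℕ)
    {V : Type*} [AddCommGroup V] [Module ℂ V] [Nontrivial V]
    {J : Type*} [DecidableEq J] (Vj : J → Submodule ℂ V)
    (hdec : DirectSum.IsInternal Vj)
    (ρ : Centz σ →* (Module.End ℂ V)ˣ) (hρ : Function.Injective ρ)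
    (hinv : ∀ (j : J) (a : Centz σ), ∀ v ∈ Vj j, (ρ a : Module.End ℂ V) v ∈ Vj j)
    (m : J → ℕ)
    (hσact : ∀ j, ∀ v ∈ Vj j, (ρ (gC σ) : Module.End ℂ V) v
        = Complex.exp (2 * (Real.pi : ℂ) * Complex.I * (m j : ℂ) / (l : ℂ)) • v) :
    ∃ F : Centz σ × Multiplicative ℝ →* (Module.End ℂ (V × V))ˣ,
      (∀ (a : Centz σ) (t : ℝ) (j : J), ∀ v ∈ Vj j,
        (F (a, Multiplicative.ofAdd t) : Module.End ℂ (V × V)) (v, 0)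
            = (Complex.exp (2 * (Real.pi : ℂ) * Complex.I * (m j : ℂ) * (t : ℂ) / (l : ℂ))
                • ((ρ a : Module.End ℂ V) v), 0)
        ∧ (F (a, Multiplicative.ofAdd t) : Module.End ℂ (V × V)) (0, v)
            = (0, Complex.exp (2 * (Real.pi : ℂ) * Complex.I
                    * ((m j : ℂ) / (l : ℂ) - 1) * (t : ℂ))
                • ((ρ a : Module.End ℂ V) v)))
      ∧ (∀ n ∈ Ng σ, F n = 1)
      ∧ ∃ ψ : Lam σ →* (Module.End ℂ (V × V))ˣ,
          (∀ (a : Centz σ) (t : ℝ) (j : J), ∀ v ∈ Vj j,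
            (ψ (lmk σ a t) : Module.End ℂ (V × V)) (v, 0)
                = (Complex.exp (2 * (Real.pi : ℂ) * Complex.I * (m j : ℂ) * (t : ℂ) / (l : ℂ))
                    • ((ρ a : Module.End ℂ V) v), 0)
            ∧ (ψ (lmk σ a t) : Module.End ℂ (V × V)) (0, v)
                = (0, Complex.exp (2 * (Real.pi : ℂ) * Complex.I
                        * ((m j : ℂ) / (l : ℂ) - 1) * (t : ℂ))
                    • ((ρ a : Module.End ℂ V) v)))
          ∧ Function.Injective ψ := by
  set θ : J → ℂ := fun j => (m j : ℂ) / l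
  have hσ : ∀ j, ∀ v ∈ Vj j, (ρ (gC σ) : Module.End ℂ V) v = exp (2 * π * I * θ j) • v := by
    simpa only [mul_div_assoc] using hσact
  have hker := ker_twistPair hdec ρ hinv θ hρ hσ
  refine ⟨hdec.twistPair ρ hinv θ, fun a t j v hv => ?_, fun n hn => hker.ge hn,
    QuotientGroup.lift (Ng σ) _ hker.ge, fun a t j v hv => ?_,
    (QuotientGroup.injective_lift_iff _ _ _).mpr hker.symm⟩
  all_goals
    obtain ⟨h₁, h₂⟩ := hdec.twistPair_apply_of_mem ρ hinv θ a t hv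
    refine ⟨h₁.trans ?_, h₂⟩
    simp only [θ]
    ring_nf

/-- With `ρ : C_G(σ) → GL(V)` faithful, `V ≠ 0`, and `V = ⨁_j V_j`
as before, the map sending `(a, t)` to the operator on `V ⊕ V` acting on the first copy
of `V_j` by `e^{2πi m_j t/l}·ρ(a)` and on the second copy by `e^{2πi(m_j/l − 1)t}·ρ(a)`
is a homomorphism trivial on `N_σ`, and the induced representation of `Λ_G(σ)` on
`V ⊕ V` is faithful. -/
theorem statement11 {G : Type*} [Group G] (σ : G) (l : ℕ)
    (hl : orderOf σ = l) (hl0 : 0 < l)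
    {V : Type*} [AddCommGroup V] [Module ℂ V] [FiniteDimensional ℂ V] [Nontrivial V]
    {J : Type*} [Fintype J] [DecidableEq J] (Vj : J → Submodule ℂ V)
    (hdec : DirectSum.IsInternal Vj)
    (ρ : Centz σ →* (Module.End ℂ V)ˣ) (hρ : Function.Injective ρ)
    (hinv : ∀ (j : J) (a : Centz σ), ∀ v ∈ Vj j, (ρ a : Module.End ℂ V) v ∈ Vj j)
    (m : J → ℕ) (hm : ∀ j, 1 ≤ m j ∧ m j ≤ l)
    (hσact : ∀ j, ∀ v ∈ Vj j, (ρ (gC σ) : Module.End ℂ V) v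
        = Complex.exp (2 * (Real.pi : ℂ) * Complex.I * (m j : ℂ) / (l : ℂ)) • v) :
    ∃ F : Centz σ × Multiplicative ℝ →* (Module.End ℂ (V × V))ˣ,
      (∀ (a : Centz σ) (t : ℝ) (j : J), ∀ v ∈ Vj j,
        (F (a, Multiplicative.ofAdd t) : Module.End ℂ (V × V)) (v, 0)
            = (Complex.exp (2 * (Real.pi : ℂ) * Complex.I * (m j : ℂ) * (t : ℂ) / (l : ℂ))
                • ((ρ a : Module.End ℂ V) v), 0)
        ∧ (F (a, Multiplicative.ofAdd t) : Module.End ℂ (V × V)) (0, v)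
            = (0, Complex.exp (2 * (Real.pi : ℂ) * Complex.I
                    * ((m j : ℂ) / (l : ℂ) - 1) * (t : ℂ))
                • ((ρ a : Module.End ℂ V) v)))
      ∧ (∀ n ∈ Ng σ, F n = 1)
      ∧ ∃ ψ : Lam σ →* (Module.End ℂ (V × V))ˣ,
          (∀ (a : Centz σ) (t : ℝ) (j : J), ∀ v ∈ Vj j,
            (ψ (lmk σ a t) : Module.End ℂ (V × V)) (v, 0)
                = (Complex.exp (2 * (Real.pi : ℂ) * Complex.I * (m j : ℂ) * (t : ℂ) / (l : ℂ))
                    • ((ρ a : Module.End ℂ V) v), 0)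
            ∧ (ψ (lmk σ a t) : Module.End ℂ (V × V)) (0, v)
                = (0, Complex.exp (2 * (Real.pi : ℂ) * Complex.I
                        * ((m j : ℂ) / (l : ℂ) - 1) * (t : ℂ))
                    • ((ρ a : Module.End ℂ V) v)))
          ∧ Function.Injective ψ :=
  statement11_general σ l Vj hdec ρ hρ hinv m hσact

end QEC
end

section
/- Let G be a group, H ≤ G a subgroup, X an H-set, and σ ∈ G. Let R ⊆ H be a set of representatives for the H-conjugacy classes of those elements of H that are conjugate to σ in G, and for each τ ∈ R fix g_τ ∈ G with τ = g_τ σ g_τ^{-1}. Then the map from the disjoint union ⨿_{τ∈R} C_G(τ) ×_{C_H(τ)} X^τ to (G ×_H X)^σ sending (τ, [a, x]) to the class [g_τ^{-1} a, x] is a well-defined bijection. -/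
namespace QEC

variable {G : Type*} [Group G]

/-- The balanced-product relation on `Γ × X`: `(γ·ι(s), x) ∼ (γ, s • x)`. -/
def balSetoid (Γ : Type*) [Group Γ] {S : Type*} [Group S] (ι : S →* Γ)
    (X : Type*) [MulAction S X] : Setoid (Γ × X) where
  r p q := ∃ s : S, p.1 = q.1 * ι s ∧ q.2 = s • p.2
  iseqv := by
    constructor
    · intro p
      exact ⟨1, by simp, by simp⟩
    · rintro p q ⟨s, h1, h2⟩
      refine ⟨s⁻¹, ?_, ?_⟩
      · rw [h1, map_inv, mul_assoc, mul_inv_cancel, mul_one]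
      · rw [h2, inv_smul_smul]
    · rintro p q r ⟨s, h1, h2⟩ ⟨u, h3, h4⟩
      refine ⟨u * s, ?_, ?_⟩
      · rw [h1, h3, map_mul, mul_assoc]
      · rw [h4, h2, mul_smul]

/-- The balanced product `Γ ×_S X` with respect to `ι : S → Γ` and an `S`-action on `X`. -/
def Bal (Γ : Type*) [Group Γ] {S : Type*} [Group S] (ι : S →* Γ)
    (X : Type*) [MulAction S X] : Type _ :=
  Quotient (balSetoid Γ ι X)

/-- The class of `(γ, x)` in the balanced product. -/
def balMk (Γ : Type*) [Group Γ] {S : Type*} [Group S] (ι : S →* Γ)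
    (X : Type*) [MulAction S X] : Γ × X → Bal Γ ι X :=
  Quotient.mk (balSetoid Γ ι X)

/-- Left translation by `g : Γ` on the balanced product. -/
def balSmul {Γ : Type*} [Group Γ] {S : Type*} [Group S] {ι : S →* Γ}
    {X : Type*} [MulAction S X] (g : Γ) : Bal Γ ι X → Bal Γ ι X :=
  Quotient.map (fun p => (g * p.1, p.2)) (by
    rintro p q ⟨s, h1, h2⟩
    exact ⟨s, by show g * p.1 = g * q.1 * ι s; rw [h1, mul_assoc], h2⟩)

/-- The fixed points `X^τ` of `τ ∈ H` acting on the `H`-set `X`. -/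
abbrev Xfix {G : Type*} [Group G] (H : Subgroup G) (X : Type*) [MulAction H X]
    (τ : H) : Type _ :=
  {x : X // τ • x = x}

/-- `C_H(τ)` viewed as the subgroup of `C_G(τ)` of elements lying in `H`. -/
def CHsub {G : Type*} [Group G] (H : Subgroup G) (τ : H) :
    Subgroup (Centz ((τ : G))) :=
  H.subgroupOf (Centz ((τ : G)))

/-- An element of `C_H(τ)`, as an element of `H`. -/
def CHsub.toH {G : Type*} [Group G] {H : Subgroup G} {τ : H}
    (s : CHsub H τ) : H :=
  ⟨((s : Centz ((τ : G))) : G), (Subgroup.mem_subgroupOf).mp s.2⟩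

lemma CHsub.toH_comm {G : Type*} [Group G] {H : Subgroup G} {τ : H}
    (s : CHsub H τ) : τ * CHsub.toH s = CHsub.toH s * τ := by
  apply Subtype.ext
  exact Subgroup.mem_centralizer_iff.mp (s : Centz ((τ : G))).2 (τ : G) (Set.mem_singleton _)

instance fixMulAction {G : Type*} [Group G] (H : Subgroup G) (X : Type*) [MulAction H X]
    (τ : H) : MulAction (CHsub H τ) (Xfix H X τ) where
  smul s x := ⟨CHsub.toH s • x.1, by
    calc (τ : H) • (CHsub.toH s • x.1) = (τ * CHsub.toH s) • x.1 := (mul_smul _ _ _).symm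
      _ = (CHsub.toH s * τ) • x.1 := by rw [CHsub.toH_comm]
      _ = CHsub.toH s • ((τ : H) • x.1) := mul_smul _ _ _
      _ = CHsub.toH s • x.1 := by rw [x.2]⟩
  one_smul x := Subtype.ext (one_smul H x.1)
  mul_smul s u x := Subtype.ext (mul_smul (CHsub.toH s) (CHsub.toH u) x.1)

/-!
A point `[u, x]` of `G ×_H X` is fixed by `σ` exactly when `σ u = u h` and `x = h • x` for some
`h ∈ H`, i.e. when `u⁻¹ σ u ∈ H` fixes `x`. The element `h` is determined up to `H`-conjugacy, so it
can be conjugated into `R`, to some `τ = c h c⁻¹`; then `g_τ u c⁻¹ ∈ C_G(τ)` and `c • x ∈ X^τ` give the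
preimage. Conversely, two preimages `[a₁, x₁]` over `τ₁` and `[a₂, x₂]` over `τ₂` with the same image
differ by an `h ∈ H` with `h⁻¹ τ₂ h = τ₁`, which forces `τ₁ = τ₂` and `h ∈ C_H(τ₁)`.
-/

section Balanced

variable {Γ : Type*} [Group Γ] {S : Type*} [Group S] {ι : S →* Γ} {X : Type*} [MulAction S X]

lemma balMk_surjective : Function.Surjective (balMk Γ ι X) :=
  Quotient.mk_surjective

lemma balMk_eq_balMk_iff {p q : Γ × X} :
    balMk Γ ι X p = balMk Γ ι X q ↔ ∃ s : S, p.1 = q.1 * ι s ∧ q.2 = s • p.2 :=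
  Quotient.eq

lemma balSmul_balMk (g : Γ) (p : Γ × X) :
    balSmul g (balMk Γ ι X p) = balMk Γ ι X (g * p.1, p.2) :=
  rfl

end Balanced

lemma mem_centz_iff_conj_eq {a τ : G} : a ∈ Centz τ ↔ a * τ * a⁻¹ = τ := by
  rw [Subgroup.mem_centralizer_singleton_iff, mul_inv_eq_iff_eq_mul]

lemma inv_mul_conj_eq_of_mem_centz {g a σ τ : G} (hg : g * σ * g⁻¹ = τ) (ha : a ∈ Centz τ) :
    (g⁻¹ * a)⁻¹ * σ * (g⁻¹ * a) = τ := by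
  have hcomm : a * τ = τ * a := Subgroup.mem_centralizer_singleton_iff.mp ha
  calc (g⁻¹ * a)⁻¹ * σ * (g⁻¹ * a) = a⁻¹ * (g * σ * g⁻¹) * a := by group
    _ = τ := by rw [hg, mul_assoc, ← hcomm, inv_mul_cancel_left]

section ChangeOfGroup

variable (H : Subgroup G) (X : Type*) [MulAction H X]

def centralizerBalMap (τ : H) (g : G) :
    Bal (Centz (τ : G)) (CHsub H τ).subtype (Xfix H X τ) → Bal G H.subtype X :=
  Quotient.lift (fun p => balMk G H.subtype X (g⁻¹ * (p.1 : G), p.2.1)) (by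
    rintro ⟨a₁, x₁⟩ ⟨a₂, x₂⟩ ⟨s, has, hx⟩
    have ha : (a₁ : G) = a₂ * ((s : Centz (τ : G)) : G) := congrArg Subtype.val has
    refine balMk_eq_balMk_iff.mpr ⟨CHsub.toH s, ?_, congrArg Subtype.val hx⟩
    change g⁻¹ * (a₁ : G) = g⁻¹ * a₂ * ((s : Centz (τ : G)) : G)
    rw [ha, mul_assoc])

lemma centralizerBalMap_balMk (τ : H) (g : G) (a : Centz (τ : G)) (x : Xfix H X τ) :
    centralizerBalMap H X τ g (balMk _ _ _ (a, x)) = balMk G H.subtype X (g⁻¹ * (a : G), x.1) :=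
  rfl

lemma balSmul_centralizerBalMap {σ : G} {τ : H} {g : G} (hg : g * σ * g⁻¹ = τ)
    (z : Bal (Centz (τ : G)) (CHsub H τ).subtype (Xfix H X τ)) :
    balSmul σ (centralizerBalMap H X τ g z) = centralizerBalMap H X τ g z := by
  obtain ⟨⟨a, x⟩, rfl⟩ := balMk_surjective z
  rw [centralizerBalMap_balMk, balSmul_balMk, balMk_eq_balMk_iff]
  refine ⟨τ, ?_, x.2.symm⟩
  change σ * (g⁻¹ * a) = g⁻¹ * a * τ
  calc σ * (g⁻¹ * a) = g⁻¹ * a * ((g⁻¹ * a)⁻¹ * σ * (g⁻¹ * a)) := by group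
    _ = g⁻¹ * a * τ := by rw [inv_mul_conj_eq_of_mem_centz hg a.2]

variable (σ : G) (R : Set H) (grep : H → G) (hgrep : ∀ τ ∈ R, grep τ * σ * (grep τ)⁻¹ = (τ : G))

def fixedPointsMap :
    ((τ : R) × Bal (Centz ((τ : H) : G)) (CHsub H (τ : H)).subtype (Xfix H X (τ : H)))
      → {z : Bal G H.subtype X // balSmul σ z = z} :=
  fun p => ⟨centralizerBalMap H X p.1 (grep p.1) p.2,
    balSmul_centralizerBalMap H X (hgrep p.1 p.1.2) p.2⟩

variable (hrep : ∀ h : H, (∃ g : G, g * σ * g⁻¹ = (h : G)) →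
    ∃! τ : H, τ ∈ R ∧ ∃ c : H, c * h * c⁻¹ = τ)
include hrep

lemma fixedPointsMap_injective : Function.Injective (fixedPointsMap H X σ R grep hgrep) := by
  rintro ⟨τ₁, z₁⟩ ⟨τ₂, z₂⟩ hf
  obtain ⟨⟨a₁, x₁⟩, rfl⟩ := balMk_surjective z₁
  obtain ⟨⟨a₂, x₂⟩, rfl⟩ := balMk_surjective z₂
  obtain ⟨h, ha, hx⟩ := balMk_eq_balMk_iff.mp (congrArg Subtype.val hf)
  change (grep τ₁)⁻¹ * (a₁ : G) = (grep τ₂)⁻¹ * a₂ * h at ha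
  have hconj : (h : G)⁻¹ * τ₂ * h = τ₁ :=
    calc (h : G)⁻¹ * τ₂ * h
        = (h : G)⁻¹ * (((grep τ₂)⁻¹ * a₂)⁻¹ * σ * ((grep τ₂)⁻¹ * a₂)) * h := by
          rw [inv_mul_conj_eq_of_mem_centz (hgrep τ₂ τ₂.2) a₂.2]
      _ = ((grep τ₂)⁻¹ * a₂ * h)⁻¹ * σ * ((grep τ₂)⁻¹ * a₂ * h) := by group
      _ = τ₁ := by rw [← ha, inv_mul_conj_eq_of_mem_centz (hgrep τ₁ τ₁.2) a₁.2]
  obtain rfl : τ₁ = τ₂ := by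
    obtain ⟨τ, -, huniq⟩ := hrep τ₂ ⟨grep τ₂, hgrep τ₂ τ₂.2⟩
    refine Subtype.ext ((huniq τ₁ ⟨τ₁.2, h⁻¹, Subtype.ext ?_⟩).trans
      (huniq τ₂ ⟨τ₂.2, 1, by simp⟩).symm)
    simpa using hconj
  have hcent : (h : G) ∈ Centz ((τ₁ : H) : G) := by
    rw [mem_centz_iff_conj_eq]
    calc (h : G) * τ₁ * (h : G)⁻¹ = h * ((h : G)⁻¹ * τ₁ * h) * (h : G)⁻¹ := by rw [hconj]
      _ = τ₁ := by group
  refine congrArg (Sigma.mk τ₁) (balMk_eq_balMk_iff.mpr ⟨⟨⟨h, hcent⟩, h.2⟩, ?_, Subtype.ext hx⟩)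
  refine Subtype.ext (mul_left_cancel (a := (grep τ₁)⁻¹) ?_)
  rw [ha, mul_assoc]
  rfl

lemma fixedPointsMap_surjective : Function.Surjective (fixedPointsMap H X σ R grep hgrep) := by
  rintro ⟨z, hz⟩
  obtain ⟨⟨u, x⟩, rfl⟩ := balMk_surjective z
  obtain ⟨h, hσu, hx⟩ := balMk_eq_balMk_iff.mp ((balSmul_balMk σ (u, x)).symm.trans hz)
  change σ * u = u * h at hσu
  change x = h • x at hx
  have hσ : u * h * u⁻¹ = σ := by
    rw [← hσu]
    group
  obtain ⟨τ, ⟨hτR, c, hc⟩, -⟩ := hrep h ⟨u⁻¹, by rw [← hσ]; group⟩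
  have hcG : (c : G) * h * (c : G)⁻¹ = τ := congrArg Subtype.val hc
  have ha : grep τ * u * (c : G)⁻¹ ∈ Centz (τ : G) := by
    have hh : (c : G)⁻¹ * τ * c = h := by
      rw [← hcG]
      group
    rw [mem_centz_iff_conj_eq]
    calc grep τ * u * (c : G)⁻¹ * τ * (grep τ * u * (c : G)⁻¹)⁻¹
        = grep τ * (u * ((c : G)⁻¹ * τ * c) * u⁻¹) * (grep τ)⁻¹ := by group
      _ = τ := by rw [hh, hσ, hgrep τ hτR]
  have hcx : τ • c • x = c • x := by
    rw [smul_smul, ← hc, inv_mul_cancel_right, mul_smul, ← hx]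
  refine ⟨⟨⟨τ, hτR⟩, balMk _ _ _ (⟨_, ha⟩, ⟨c • x, hcx⟩)⟩, Subtype.ext ?_⟩
  refine balMk_eq_balMk_iff.mpr ⟨c⁻¹, ?_, (inv_smul_smul c x).symm⟩
  change (grep τ)⁻¹ * (grep τ * u * (c : G)⁻¹) = u * (c : G)⁻¹
  group

end ChangeOfGroup

theorem statement14_general {G : Type*} [Group G] (H : Subgroup G) (X : Type*) [MulAction H X]
    (σ : G) (R : Set H)
    (grep : H → G)
    (hgrep : ∀ τ ∈ R, grep τ * σ * (grep τ)⁻¹ = (τ : G))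
    (hrep : ∀ h : H, (∃ g : G, g * σ * g⁻¹ = (h : G)) →
        ∃! τ : H, τ ∈ R ∧ ∃ c : H, c * h * c⁻¹ = τ) :
    ∃ f : ((τ : R) × Bal (Centz (((τ : H) : G))) (CHsub H (τ : H)).subtype
            (Xfix H X (τ : H)))
        → {z : Bal G H.subtype X // balSmul σ z = z},
      (∀ (τ : R) (a : Centz (((τ : H) : G))) (x : Xfix H X (τ : H)),
        (f ⟨τ, balMk (Centz (((τ : H) : G))) (CHsub H (τ : H)).subtype
              (Xfix H X (τ : H)) (a, x)⟩ : Bal G H.subtype X)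
          = balMk G H.subtype X ((grep (τ : H))⁻¹ * (a : G), x.1))
      ∧ Function.Bijective f :=
  ⟨fixedPointsMap H X σ R grep hgrep, fun _ _ _ => rfl,
    fixedPointsMap_injective H X σ R grep hgrep hrep,
    fixedPointsMap_surjective H X σ R grep hgrep hrep⟩

/-- Let `H ≤ G`, `X` an `H`-set, `σ ∈ G`, and let `R ⊆ H` be a set of
representatives for the `H`-conjugacy classes of elements of `H` that are conjugate to
`σ` in `G`, with `g_τ σ g_τ⁻¹ = τ` for each `τ ∈ R`.  Then
`⨿_{τ∈R} C_G(τ) ×_{C_H(τ)} X^τ → (G ×_H X)^σ`, `(τ, [a, x]) ↦ [g_τ⁻¹ a, x]`,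
is a well-defined bijection. -/
theorem statement14 {G : Type*} [Group G] (H : Subgroup G) (X : Type*) [MulAction H X]
    (σ : G) (R : Set H)
    (hconj : ∀ τ ∈ R, ∃ g : G, g * σ * g⁻¹ = (τ : G))
    (grep : H → G)
    (hgrep : ∀ τ ∈ R, grep τ * σ * (grep τ)⁻¹ = (τ : G))
    (hrep : ∀ h : H, (∃ g : G, g * σ * g⁻¹ = (h : G)) →
        ∃! τ : H, τ ∈ R ∧ ∃ c : H, c * h * c⁻¹ = τ) :
    ∃ f : ((τ : R) × Bal (Centz (((τ : H) : G))) (CHsub H (τ : H)).subtype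
            (Xfix H X (τ : H)))
        → {z : Bal G H.subtype X // balSmul σ z = z},
      (∀ (τ : R) (a : Centz (((τ : H) : G))) (x : Xfix H X (τ : H)),
        (f ⟨τ, balMk (Centz (((τ : H) : G))) (CHsub H (τ : H)).subtype
              (Xfix H X (τ : H)) (a, x)⟩ : Bal G H.subtype X)
          = balMk G H.subtype X ((grep (τ : H))⁻¹ * (a : G), x.1))
      ∧ Function.Bijective f :=
  statement14_general H X σ R grep hgrep hrep

end QEC
end
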